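/- For complex numbers v, φ, ψ, one has 2(v²ψφ̄ + v̄²ψ̄φ)(|ψ|² + |φ|²) + |v|²(|ψ|⁴ + |φ|⁴ + 6|φ|²|ψ|²) = ¼⟨Å(V), Å(V)⟩, where Å(V) = ¼(⟨B(e,e),V⟩B(ē,ē) + ⟨B(ē,ē),V⟩B(e,e)) with V = (v n̄ + v̄ n)/2, B(e,e) = 2ψ̄ n̄ + 2φ̄ n, and the bilinear product on the complexified normal bundle satisfies ⟨n,n⟩ = ⟨n̄,n̄⟩ = 0, ⟨n,n̄⟩ = 2. Here the left side is understood as a real number (it is real since the first sum is twice a real part). -/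

import Mathlib

open Complex ComplexConjugate

noncomputable section

/-- The complex bilinear inner product on `span_ℂ{n̄, n}` (pairs `(x,y) ↔ x n̄ + y n`),
with `⟨n,n⟩ = ⟨n̄,n̄⟩ = 0`, `⟨n,n̄⟩ = 2`. -/
def nbil (v w : ℂ × ℂ) : ℂ := 2 * (v.1 * w.2 + v.2 * w.1)

/-!
Write `a = ⟨B(e,e), V⟩`; then `⟨B(ē,ē), V⟩ = ā`, so `Å(V) = ¼(a B(ē,ē) + ā B(e,e))` and
expanding the quadratic form gives `¼⟨Å,Å⟩` in terms of `a` and the three products of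
`B(e,e)`, `B(ē,ē)`. After `|z|² = z z̄` both sides are the same polynomial in
`v, φ, ψ` and their conjugates.
-/

theorem nbil_smul_add_smul_self (a b : ℂ) (X Y : ℂ × ℂ) :
    nbil (a • X + b • Y) (a • X + b • Y) =
      a ^ 2 * nbil X X + 2 * a * b * nbil X Y + b ^ 2 * nbil Y Y := by
  simp only [nbil, Prod.fst_add, Prod.snd_add, Prod.smul_fst, Prod.smul_snd, smul_eq_mul]
  ring

theorem ofReal_norm_pow_four (z : ℂ) : ((‖z‖ : ℝ) : ℂ) ^ 4 = (z * conj z) ^ 2 := by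
  rw [mul_conj', ← pow_mul]

/-- Identity (eq-2cav) from the simplification of the second variation of the Willmore
functional: for complex numbers `v, φ, ψ`, with `V = (v n̄ + v̄ n)/2`,
`B(e,e) = 2ψ̄ n̄ + 2φ̄ n`, `B(ē,ē) = 2φ n̄ + 2ψ n` and
`Å(V) = ¼(⟨B(e,e),V⟩B(ē,ē) + ⟨B(ē,ē),V⟩B(e,e))`,
`2(v²ψφ̄ + v̄²ψ̄φ)(|ψ|² + |φ|²) + |v|²(|ψ|⁴ + |φ|⁴ + 6|φ|²|ψ|²) = ¼⟨Å(V), Å(V)⟩`. -/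
theorem stmt_13 (v φ ψ : ℂ) :
    let V : ℂ × ℂ := (v / 2, (starRingEnd ℂ) v / 2)
    let Bee : ℂ × ℂ := (2 * (starRingEnd ℂ) ψ, 2 * (starRingEnd ℂ) φ)
    let Bbb : ℂ × ℂ := (2 * φ, 2 * ψ)
    let Acal : ℂ × ℂ := (1 / 4 : ℂ) • (nbil Bee V • Bbb + nbil Bbb V • Bee)
    2 * (v ^ 2 * ψ * (starRingEnd ℂ) φ + ((starRingEnd ℂ) v) ^ 2 * (starRingEnd ℂ) ψ * φ)
        * (((‖ψ‖ : ℝ) : ℂ) ^ 2 + ((‖φ‖ : ℝ) : ℂ) ^ 2)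
      + ((‖v‖ : ℝ) : ℂ) ^ 2
        * (((‖ψ‖ : ℝ) : ℂ) ^ 4 + ((‖φ‖ : ℝ) : ℂ) ^ 4
            + 6 * ((‖φ‖ : ℝ) : ℂ) ^ 2 * ((‖ψ‖ : ℝ) : ℂ) ^ 2)
      = (1 / 4 : ℂ) * nbil Acal Acal := by
  intro V Bee Bbb Acal
  set a := nbil Bee V with ha
  have ha_conj : nbil Bbb V = conj a := by
    simp only [ha, nbil, Bee, Bbb, V, map_mul, map_add, map_div₀, map_ofNat, conj_conj]
    ring
  have hAcal : nbil Acal Acal =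
      (1 / 16) * (a ^ 2 * nbil Bbb Bbb + 2 * a * conj a * nbil Bbb Bee
        + conj a ^ 2 * nbil Bee Bee) := by
    simp only [Acal, ha_conj, smul_add, smul_smul, nbil_smul_add_smul_self]
    ring
  have hBbb : nbil Bbb Bbb = 16 * φ * ψ := by simp only [nbil, Bbb]; ring
  have hBee : nbil Bee Bee = 16 * conj ψ * conj φ := by simp only [nbil, Bee]; ring
  have hBbbBee : nbil Bbb Bee = 8 * (φ * conj φ + ψ * conj ψ) := by
    simp only [nbil, Bbb, Bee]; ring
  rw [hAcal, hBbb, hBee, hBbbBee, ha, ofReal_norm_pow_four, ofReal_norm_pow_four,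
    ← mul_conj', ← mul_conj', ← mul_conj']
  simp only [nbil, Bee, V, map_mul, map_add, map_div₀, map_ofNat, conj_conj]
  ring

end
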